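/- arXiv:0910.4921 — 2 statements merged into one kernel-verified Lean document; each statement's English description precedes it below -/
import Mathlib

section
/- Let (M,d) be a complete cone metric space over a real Banach space E with a normal cone P with normal constant K, let T, R : M → M be injective and continuous maps, and let S : M → M be a continuous TR-contraction with constant a ∈ [0,1). Then for every x₀ ∈ M, the doubly indexed family d(T(Sⁿx₀), R(Sᵐx₀)) tends to 0 in E as n, m → ∞ (equivalently, ‖d(T(Sⁿx₀), R(Sᵐx₀))‖ → 0 as n, m → ∞). -/
/-!
Write `xₙ = Sⁿ x₀`. Iterating the contraction gives `d(T xₙ, R xₙ) ≤ aⁿ d(T x₀, R x₀)` and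
`d(T xₙ₊₁, R xₙ) ≤ aⁿ d(T x₁, R x₀)`, so passing through `R xₙ` the steps of `(T xₙ)` are
bounded by `aⁿ W` with `W = d(T x₀, R x₀) + d(T x₁, R x₀)`. Summing the geometric series,
`d(T xₙ, R xₘ) ≤ d(T xₙ, T xₘ) + d(T xₘ, R xₘ) ≤ a^{min n m} B` in the cone order, for a fixed
`B ∈ P`, and normality of the cone turns this into `‖d(T xₙ, R xₘ)‖ ≤ K a^{min n m} ‖B‖ → 0`.
-/

open Filter

/-- `P` is a cone in the real Banach space `E`: nonempty, closed, not `{0}`,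
closed under nonnegative linear combinations, and `P ∩ (-P) = {0}`. -/
def IsCone {E : Type*} [NormedAddCommGroup E] [NormedSpace ℝ E] (P : Set E) : Prop :=
  P.Nonempty ∧ IsClosed P ∧ P ≠ {0} ∧
    (∀ (a b : ℝ), 0 ≤ a → 0 ≤ b → ∀ x ∈ P, ∀ y ∈ P, a • x + b • y ∈ P) ∧
    (∀ x ∈ P, -x ∈ P → x = 0)

/-- The partial order induced by the cone `P`: `x ≤ y` iff `y - x ∈ P`. -/
def ConeLe {E : Type*} [NormedAddCommGroup E] (P : Set E) (x y : E) : Prop :=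
  y - x ∈ P

/-- The strict order induced by the cone `P`: `x ≪ y` iff `y - x ∈ interior P`. -/
def ConeLt {E : Type*} [NormedAddCommGroup E] (P : Set E) (x y : E) : Prop :=
  y - x ∈ interior P

/-- `P` is a normal cone with normal constant `K`:
`K > 0` and `0 ≤ x ≤ y` implies `‖x‖ ≤ K * ‖y‖`. -/
def IsNormalCone {E : Type*} [NormedAddCommGroup E] (P : Set E) (K : ℝ) : Prop :=
  0 < K ∧ ∀ x y : E, ConeLe P 0 x → ConeLe P x y → ‖x‖ ≤ K * ‖y‖

/-- `d` is a cone metric on `M` with respect to the cone `P ⊆ E`. -/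
def IsConeMetric {E : Type*} [NormedAddCommGroup E] (P : Set E) {M : Type*}
    (d : M → M → E) : Prop :=
  (∀ x y : M, x ≠ y → ConeLe P 0 (d x y) ∧ d x y ≠ 0) ∧
  (∀ x y : M, d x y = 0 ↔ x = y) ∧
  (∀ x y : M, d x y = d y x) ∧
  (∀ x y z : M, ConeLe P (d x y) (d x z + d z y))

/-- Convergence of a sequence in a cone metric space:
for every `c` with `0 ≪ c` eventually `d (s n) l ≪ c`. -/
def ConeConverges {E : Type*} [NormedAddCommGroup E] (P : Set E) {M : Type*}
    (d : M → M → E) (s : ℕ → M) (l : M) : Prop :=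
  ∀ c : E, ConeLt P 0 c → ∃ n₀ : ℕ, ∀ n ≥ n₀, ConeLt P (d (s n) l) c

/-- Cauchy sequences in a cone metric space. -/
def ConeCauchy {E : Type*} [NormedAddCommGroup E] (P : Set E) {M : Type*}
    (d : M → M → E) (s : ℕ → M) : Prop :=
  ∀ c : E, ConeLt P 0 c → ∃ n₀ : ℕ, ∀ n ≥ n₀, ∀ m ≥ n₀, ConeLt P (d (s n) (s m)) c

/-- The cone metric space `(M, d)` is complete: every Cauchy sequence converges. -/
def ConeComplete {E : Type*} [NormedAddCommGroup E] (P : Set E) {M : Type*}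
    (d : M → M → E) : Prop :=
  ∀ s : ℕ → M, ConeCauchy P d s → ∃ l : M, ConeConverges P d s l

/-- The cone metric space `(M, d)` is sequentially compact:
every sequence has a convergent subsequence. -/
def ConeSeqCompact {E : Type*} [NormedAddCommGroup E] (P : Set E) {M : Type*}
    (d : M → M → E) : Prop :=
  ∀ s : ℕ → M, ∃ φ : ℕ → ℕ, StrictMono φ ∧ ∃ l : M, ConeConverges P d (fun i => s (φ i)) l

/-- `T : M → M` is continuous for the cone metric `d`: it preserves convergent sequences. -/
def ConeContinuousMap {E : Type*} [NormedAddCommGroup E] (P : Set E) {M : Type*}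
    (d : M → M → E) (T : M → M) : Prop :=
  ∀ (s : ℕ → M) (l : M), ConeConverges P d s l → ConeConverges P d (fun n => T (s n)) (T l)

/-- `T` is sequentially convergent: if `(T yₙ)` converges then `(yₙ)` converges. -/
def ConeSeqConvergent {E : Type*} [NormedAddCommGroup E] (P : Set E) {M : Type*}
    (d : M → M → E) (T : M → M) : Prop :=
  ∀ s : ℕ → M, (∃ l : M, ConeConverges P d (fun n => T (s n)) l) →
    ∃ l : M, ConeConverges P d s l

/-- `T` is subsequentially convergent: if `(T yₙ)` converges then `(yₙ)` has a
convergent subsequence. -/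
def ConeSubseqConvergent {E : Type*} [NormedAddCommGroup E] (P : Set E) {M : Type*}
    (d : M → M → E) (T : M → M) : Prop :=
  ∀ s : ℕ → M, (∃ l : M, ConeConverges P d (fun n => T (s n)) l) →
    ∃ φ : ℕ → ℕ, StrictMono φ ∧ ∃ l : M, ConeConverges P d (fun i => s (φ i)) l

def IsTRContraction {E : Type*} [NormedAddCommGroup E] [SMul ℝ E] (P : Set E) {M : Type*}
    (d : M → M → E) (T R S : M → M) (a : ℝ) : Prop :=
  ∀ x y : M, ConeLe P (d (T (S x)) (R (S y))) (a • d (T x) (R y))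

section

variable {E : Type*} [NormedAddCommGroup E] {P : Set E}

theorem coneLe_zero_left_iff {x : E} : ConeLe P 0 x ↔ x ∈ P := by
  rw [ConeLe, sub_zero]

namespace IsCone

variable [NormedSpace ℝ E] (hP : IsCone P)
include hP

theorem smul_mem {c : ℝ} (hc : 0 ≤ c) {x : E} (hx : x ∈ P) : c • x ∈ P := by
  simpa using hP.2.2.2.1 c 0 hc le_rfl x hx x hx

theorem add_mem {x y : E} (hx : x ∈ P) (hy : y ∈ P) : x + y ∈ P := by
  simpa using hP.2.2.2.1 1 1 zero_le_one zero_le_one x hx y hy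

theorem zero_mem : (0 : E) ∈ P := by
  obtain ⟨x, hx⟩ := hP.1
  simpa using hP.smul_mem le_rfl hx

theorem coneLe_refl (x : E) : ConeLe P x x := by
  rw [ConeLe, sub_self]
  exact hP.zero_mem

theorem coneLe_trans {x y z : E} (hxy : ConeLe P x y) (hyz : ConeLe P y z) : ConeLe P x z := by
  have h := hP.add_mem hyz hxy
  rwa [sub_add_sub_cancel] at h

theorem coneLe_add {x y x' y' : E} (h : ConeLe P x y) (h' : ConeLe P x' y') :
    ConeLe P (x + x') (y + y') := by
  rw [ConeLe, add_sub_add_comm]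
  exact hP.add_mem h h'

theorem smul_coneLe_smul {c : ℝ} (hc : 0 ≤ c) {x y : E} (h : ConeLe P x y) :
    ConeLe P (c • x) (c • y) := by
  rw [ConeLe, ← smul_sub]
  exact hP.smul_mem hc h

theorem smul_coneLe_smul_of_le {c c' : ℝ} (hc : c ≤ c') {x : E} (hx : x ∈ P) :
    ConeLe P (c • x) (c' • x) := by
  rw [ConeLe, ← sub_smul]
  exact hP.smul_mem (sub_nonneg.2 hc) hx

end IsCone

namespace IsConeMetric

variable {M : Type*} {d : M → M → E} (hd : IsConeMetric P d)
include hd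

theorem dist_self (x : M) : d x x = 0 := (hd.2.1 x x).2 rfl

theorem dist_comm (x y : M) : d x y = d y x := hd.2.2.1 x y

theorem triangle (x y z : M) : ConeLe P (d x y) (d x z + d z y) := hd.2.2.2 x y z

variable [NormedSpace ℝ E]

theorem dist_mem (hP : IsCone P) (x y : M) : d x y ∈ P := by
  by_cases h : x = y
  · rw [(hd.2.1 x y).2 h]
    exact hP.zero_mem
  · exact coneLe_zero_left_iff.1 (hd.1 x y h).1

theorem dist_le_sum_of_dist_succ_le (hP : IsCone P) {s : ℕ → M} {u : ℕ → ℝ} {W : E}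
    (hstep : ∀ n, ConeLe P (d (s n) (s (n + 1))) (u n • W)) (n k : ℕ) :
    ConeLe P (d (s n) (s (n + k))) ((∑ i ∈ Finset.Ico n (n + k), u i) • W) := by
  induction k with
  | zero => simpa [hd.dist_self] using hP.coneLe_refl 0
  | succ k ih =>
    rw [← add_assoc, Finset.sum_Ico_succ_top (Nat.le_add_right n k), add_smul]
    exact hP.coneLe_trans (hd.triangle _ _ (s (n + k))) (hP.coneLe_add ih (hstep _))

theorem dist_le_of_dist_succ_le_pow (hP : IsCone P) {s : ℕ → M} {a : ℝ} (ha0 : 0 ≤ a)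
    (ha1 : a < 1) {W : E} (hW : W ∈ P) (hstep : ∀ n, ConeLe P (d (s n) (s (n + 1))) (a ^ n • W))
    (n m : ℕ) :
    ConeLe P (d (s n) (s m)) ((a ^ min n m / (1 - a)) • W) := by
  wlog hnm : n ≤ m generalizing n m
  · rw [hd.dist_comm, min_comm]
    exact this m n (le_of_not_ge hnm)
  obtain ⟨k, rfl⟩ := Nat.exists_eq_add_of_le hnm
  rw [min_eq_left hnm]
  exact hP.coneLe_trans (hd.dist_le_sum_of_dist_succ_le hP hstep n k)
    (hP.smul_coneLe_smul_of_le (geom_sum_Ico_le_of_lt_one ha0 ha1) hW)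

end IsConeMetric

namespace IsTRContraction

variable [NormedSpace ℝ E] {M : Type*} {d : M → M → E} {T R S : M → M} {a : ℝ}
  (hS : IsTRContraction P d T R S a) (hP : IsCone P) (ha0 : 0 ≤ a)
include hS hP ha0

theorem iterate (n : ℕ) (x y : M) :
    ConeLe P (d (T (S^[n] x)) (R (S^[n] y))) (a ^ n • d (T x) (R y)) := by
  induction n generalizing x y with
  | zero => simpa using hP.coneLe_refl _
  | succ n ih =>
    rw [Function.iterate_succ_apply, Function.iterate_succ_apply, pow_succ, mul_smul]
    exact hP.coneLe_trans (ih (S x) (S y)) (hP.smul_coneLe_smul (pow_nonneg ha0 n) (hS x y))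

variable (hd : IsConeMetric P d)
include hd

theorem dist_iterate_succ_le (x : M) (n : ℕ) :
    ConeLe P (d (T (S^[n] x)) (T (S^[n + 1] x)))
      (a ^ n • (d (T x) (R x) + d (T (S x)) (R x))) := by
  have hpath := hd.triangle (T (S^[n] x)) (T (S^[n + 1] x)) (R (S^[n] x))
  rw [hd.dist_comm (R _), Function.iterate_succ_apply] at hpath
  rw [smul_add]
  exact hP.coneLe_trans hpath (hP.coneLe_add (hS.iterate hP ha0 n x x) (hS.iterate hP ha0 n _ x))

theorem dist_iterate_le (ha1 : a < 1) (x : M) (n m : ℕ) :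
    ConeLe P (d (T (S^[n] x)) (R (S^[m] x)))
      (a ^ min n m • ((1 - a)⁻¹ • (d (T x) (R x) + d (T (S x)) (R x)) + d (T x) (R x))) := by
  have hW := hP.add_mem (hd.dist_mem hP (T x) (R x)) (hd.dist_mem hP (T (S x)) (R x))
  have hTT := hd.dist_le_of_dist_succ_le_pow hP ha0 ha1 hW (hS.dist_iterate_succ_le hP ha0 hd x) n m
  have hTR : ConeLe P (d (T (S^[m] x)) (R (S^[m] x))) (a ^ min n m • d (T x) (R x)) :=
    hP.coneLe_trans (hS.iterate hP ha0 m x x) (hP.smul_coneLe_smul_of_le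
      (pow_le_pow_of_le_one ha0 ha1.le (min_le_right n m)) (hd.dist_mem hP _ _))
  rw [smul_add, smul_smul, ← div_eq_mul_inv]
  exact hP.coneLe_trans (hd.triangle _ _ _) (hP.coneLe_add hTT hTR)

end IsTRContraction

theorem IsNormalCone.exists_norm_lt_of_coneLe_pow_min [NormedSpace ℝ E] {K : ℝ}
    (hK : IsNormalCone P K) {f : ℕ → ℕ → E} {a : ℝ} (ha0 : 0 ≤ a) (ha1 : a < 1) {B : E}
    (hf0 : ∀ n m, ConeLe P 0 (f n m))
    (hfB : ∀ n m, ConeLe P (f n m) (a ^ min n m • B)) :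
    ∀ ε : ℝ, 0 < ε → ∃ N : ℕ, ∀ n ≥ N, ∀ m ≥ N, ‖f n m‖ < ε := by
  intro ε hε
  have hlim : Tendsto (fun N : ℕ => K * ‖B‖ * a ^ N) atTop (nhds 0) := by
    simpa using (tendsto_pow_atTop_nhds_zero_of_lt_one ha0 ha1).const_mul (K * ‖B‖)
  obtain ⟨N, hN⟩ := (hlim.eventually (gt_mem_nhds hε)).exists
  refine ⟨N, fun n hn m hm => ?_⟩
  have hpow : a ^ min n m ≤ a ^ N := pow_le_pow_of_le_one ha0 ha1.le (le_min hn hm)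
  calc ‖f n m‖ ≤ K * ‖a ^ min n m • B‖ := hK.2 _ _ (hf0 n m) (hfB n m)
    _ = K * ‖B‖ * a ^ min n m := by
      rw [norm_smul, Real.norm_of_nonneg (pow_nonneg ha0 _)]; ring
    _ ≤ K * ‖B‖ * a ^ N := mul_le_mul_of_nonneg_left hpow (mul_nonneg hK.1.le (norm_nonneg B))
    _ < ε := hN

end

theorem stmt0_general
    {E : Type*} [NormedAddCommGroup E] [NormedSpace ℝ E]
    {M : Type*} (P : Set E) (hP : IsCone P)
    (K : ℝ) (hK : IsNormalCone P K)
    (d : M → M → E) (hd : IsConeMetric P d)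
    (T R : M → M)
    (S : M → M)
    (a : ℝ) (ha0 : 0 ≤ a) (ha1 : a < 1)
    (hS : ∀ x y : M, ConeLe P (d (T (S x)) (R (S y))) (a • d (T x) (R y)))
    (x₀ : M) :
    ∀ ε : ℝ, 0 < ε → ∃ N : ℕ, ∀ n ≥ N, ∀ m ≥ N,
      ‖d (T (S^[n] x₀)) (R (S^[m] x₀))‖ < ε :=
  hK.exists_norm_lt_of_coneLe_pow_min ha0 ha1
    (fun _ _ => coneLe_zero_left_iff.2 (hd.dist_mem hP _ _))
    (IsTRContraction.dist_iterate_le hS hP ha0 hd ha1 x₀)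

theorem stmt0
    {E : Type*} [NormedAddCommGroup E] [NormedSpace ℝ E] [CompleteSpace E]
    {M : Type*} (P : Set E) (hP : IsCone P) (hPint : (interior P).Nonempty)
    (K : ℝ) (hK : IsNormalCone P K)
    (d : M → M → E) (hd : IsConeMetric P d) (hM : ConeComplete P d)
    (T R : M → M) (hTinj : Function.Injective T) (hRinj : Function.Injective R)
    (hTc : ConeContinuousMap P d T) (hRc : ConeContinuousMap P d R)
    (S : M → M) (hSc : ConeContinuousMap P d S)
    (a : ℝ) (ha0 : 0 ≤ a) (ha1 : a < 1)
    (hS : ∀ x y : M, ConeLe P (d (T (S x)) (R (S y))) (a • d (T x) (R y)))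
    (x₀ : M) :
    ∀ ε : ℝ, 0 < ε → ∃ N : ℕ, ∀ n ≥ N, ∀ m ≥ N,
      ‖d (T (S^[n] x₀)) (R (S^[m] x₀))‖ < ε :=
  stmt0_general P hP K hK d hd T R S a ha0 ha1 hS x₀
end

section
/- Let (M,d) be a cone metric space over a real Banach space E with cone P, let T, R, S : M → M with d(T(Sx), R(Sy)) ≤ a·d(Tx, Ry) for all x, y ∈ M and some a ∈ [0,1), let x₀ ∈ M and c ∈ E, and suppose d(T(Sx₀), Tx₀) ≤ (1−a)·c. Then for every x ∈ M with d(Tx₀, Rx) ≤ c one has d(Tx₀, R(Sx)) ≤ c; that is, the map x ↦ Sx sends points whose R-image lies in the ball B(Tx₀, c) = { y ∈ M : d(Tx₀, y) ≤ c } to points whose R-image lies in B(Tx₀, c). -/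
open Filter

section ConeOrder

variable {E : Type*} [NormedAddCommGroup E] [NormedSpace ℝ E] {P : Set E}

theorem IsCone.add_mem_s8 (hP : IsCone P) {x y : E} (hx : x ∈ P) (hy : y ∈ P) : x + y ∈ P := by
  simpa using hP.2.2.2.1 1 1 zero_le_one zero_le_one x hx y hy

theorem IsCone.smul_mem_s8 (hP : IsCone P) {a : ℝ} (ha : 0 ≤ a) {x : E} (hx : x ∈ P) :
    a • x ∈ P := by
  simpa using hP.2.2.2.1 a 0 ha le_rfl x hx x hx

theorem ConeLe.trans (hP : IsCone P) {x y z : E} (hxy : ConeLe P x y) (hyz : ConeLe P y z) :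
    ConeLe P x z := by
  simpa [ConeLe] using hP.add_mem_s8 hyz hxy

theorem ConeLe.add (hP : IsCone P) {x₁ x₂ y₁ y₂ : E} (h₁ : ConeLe P x₁ y₁)
    (h₂ : ConeLe P x₂ y₂) : ConeLe P (x₁ + x₂) (y₁ + y₂) := by
  have := hP.add_mem_s8 h₁ h₂
  rwa [← add_sub_add_comm] at this

theorem ConeLe.smul_of_nonneg (hP : IsCone P) {a : ℝ} (ha : 0 ≤ a) {x y : E}
    (h : ConeLe P x y) : ConeLe P (a • x) (a • y) := by
  have := hP.smul_mem_s8 ha h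
  rwa [smul_sub] at this

end ConeOrder

section ConeMetric

variable {E : Type*} [NormedAddCommGroup E] {P : Set E} {M : Type*} {d : M → M → E}

theorem IsConeMetric.comm (hd : IsConeMetric P d) (x y : M) : d x y = d y x :=
  hd.2.2.1 x y

theorem IsConeMetric.triangle_s8 (hd : IsConeMetric P d) (x y z : M) :
    ConeLe P (d x z) (d x y + d y z) :=
  hd.2.2.2 x z y

end ConeMetric

theorem stmt8_general
    {E : Type*} [NormedAddCommGroup E] [NormedSpace ℝ E]
    {M : Type*} (P : Set E) (hP : IsCone P)
    (d : M → M → E) (hd : IsConeMetric P d)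
    (T R S : M → M)
    (a : ℝ) (ha0 : 0 ≤ a)
    (hS : ∀ x y : M, ConeLe P (d (T (S x)) (R (S y))) (a • d (T x) (R y)))
    (x₀ : M) (c : E)
    (hx₀ : ConeLe P (d (T (S x₀)) (T x₀)) ((1 - a) • c)) :
    ∀ x : M, ConeLe P (d (T x₀) (R x)) c → ConeLe P (d (T x₀) (R (S x))) c := by
  intro x hx
  have hcenter : ConeLe P (d (T x₀) (T (S x₀))) ((1 - a) • c) := hd.comm (T x₀) _ ▸ hx₀
  have hstep : ConeLe P (d (T (S x₀)) (R (S x))) (a • c) :=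
    (hS x₀ x).trans hP (hx.smul_of_nonneg hP ha0)
  have hsplit : (1 - a) • c + a • c = c := by rw [← add_smul, sub_add_cancel, one_smul]
  have hbound := (hd.triangle_s8 (T x₀) (T (S x₀)) (R (S x))).trans hP (hcenter.add hP hstep)
  rwa [hsplit] at hbound

theorem stmt8
    {E : Type*} [NormedAddCommGroup E] [NormedSpace ℝ E]
    {M : Type*} (P : Set E) (hP : IsCone P) (hPint : (interior P).Nonempty)
    (d : M → M → E) (hd : IsConeMetric P d)
    (T R S : M → M)
    (a : ℝ) (ha0 : 0 ≤ a) (ha1 : a < 1)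
    (hS : ∀ x y : M, ConeLe P (d (T (S x)) (R (S y))) (a • d (T x) (R y)))
    (x₀ : M) (c : E)
    (hx₀ : ConeLe P (d (T (S x₀)) (T x₀)) ((1 - a) • c)) :
    ∀ x : M, ConeLe P (d (T x₀) (R x)) c → ConeLe P (d (T x₀) (R (S x))) c :=
  stmt8_general P hP d hd T R S a ha0 hS x₀ c hx₀
end
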